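/- arXiv:2411.11336 — 6 statements merged into one kernel-verified Lean document; each statement's English description precedes it below -/
import Mathlib

section
/- If P is a complex polynomial of degree at most n, then the maximum of |P'(z)| over the unit circle |z|=1 is at most n times the maximum of |P(z)| over the unit circle. -/
/-! If `‖P'(z)‖ > n M` at a point `z` of the unit circle, where `M = maxSphere P`, choose `c` with
`c n z^(n-1) = P'(z)`, so that `‖c‖ > M`. The maximum principle applied to the reflected polynomial
`w^n P(1/w)` gives `‖P(w)‖ ≤ M ‖w‖^n` for `‖w‖ ≥ 1` and `‖coeff n P‖ ≤ M`. Hence `Q = c X^n - P` has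
positive degree and all its roots in the open unit disk, so by the Gauss–Lucas theorem so do the
roots of `Q'`; but `Q'(z) = 0`. -/

open Polynomial Metric Set

noncomputable def maxSphere (P : Polynomial ℂ) : ℝ :=
  sSup ((fun w => ‖P.eval w‖) '' sphere (0:ℂ) 1)

noncomputable def minSphere (P : Polynomial ℂ) : ℝ :=
  sInf ((fun w => ‖P.eval w‖) '' sphere (0:ℂ) 1)

lemma norm_eval_le_maxSphere (P : ℂ[X]) {w : ℂ} (hw : ‖w‖ = 1) : ‖P.eval w‖ ≤ maxSphere P :=
  le_csSup ((isCompact_sphere (0 : ℂ) 1).image P.continuous.norm).bddAbove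
    ⟨w, by simpa using hw, rfl⟩

theorem Polynomial.eval_reflect_inv_mul_pow {K : Type*} [Field K] {N : ℕ} {f : K[X]}
    (hf : f.natDegree ≤ N) {x : K} (hx : x ≠ 0) : (reflect N f).eval x⁻¹ * x ^ N = f.eval x := by
  let := invertibleOfNonzero hx
  simpa only [eval, invOf_eq_inv] using eval₂_reflect_mul_pow (RingHom.id K) x N f hf

theorem Polynomial.norm_eval_le_of_forall_norm_eq_one {Q : ℂ[X]} {C : ℝ}
    (h : ∀ w : ℂ, ‖w‖ = 1 → ‖Q.eval w‖ ≤ C) {w : ℂ} (hw : ‖w‖ ≤ 1) : ‖Q.eval w‖ ≤ C := by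
  refine Complex.norm_le_of_forall_mem_frontier_norm_le (isBounded_ball (x := 0) (r := 1))
    Q.differentiable.diffContOnCl (fun z hz => h z ?_) (z := w) ?_
  · simpa [frontier_ball _ one_ne_zero] using hz
  · simpa [closure_ball _ one_ne_zero] using hw

lemma norm_eval_reflect_le_maxSphere {n : ℕ} {P : ℂ[X]} (hP : P.natDegree ≤ n) {w : ℂ}
    (hw : ‖w‖ ≤ 1) : ‖(reflect n P).eval w‖ ≤ maxSphere P := by
  refine norm_eval_le_of_forall_norm_eq_one (fun w hw => ?_) hw
  have hw₀ : w ≠ 0 := norm_ne_zero_iff.1 (by simp [hw])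
  have h := eval_reflect_inv_mul_pow hP (inv_ne_zero hw₀)
  rw [inv_inv] at h
  calc ‖(reflect n P).eval w‖ = ‖P.eval w⁻¹‖ := by simp [← h, hw]
    _ ≤ maxSphere P := norm_eval_le_maxSphere P (by simp [hw])

lemma norm_coeff_le_maxSphere {n : ℕ} {P : ℂ[X]} (hP : P.natDegree ≤ n) :
    ‖P.coeff n‖ ≤ maxSphere P := by
  have h := norm_eval_reflect_le_maxSphere hP (w := 0) (by simp)
  rwa [← coeff_zero_eq_eval_zero, coeff_reflect, revAt_zero] at h

lemma norm_eval_le_maxSphere_mul_pow {n : ℕ} {P : ℂ[X]} (hP : P.natDegree ≤ n) {z : ℂ}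
    (hz : 1 ≤ ‖z‖) : ‖P.eval z‖ ≤ maxSphere P * ‖z‖ ^ n := by
  have hz₀ : z ≠ 0 := norm_pos_iff.1 (by linarith)
  rw [← eval_reflect_inv_mul_pow hP hz₀, norm_mul, norm_pow]
  gcongr
  exact norm_eval_reflect_le_maxSphere hP (by simpa using inv_le_one_of_one_le₀ hz)

lemma rootSet_C_mul_X_pow_sub_subset_ball {n : ℕ} {P : ℂ[X]} (hP : P.natDegree ≤ n) {c : ℂ}
    (hc : maxSphere P < ‖c‖) : (C c * X ^ n - P).rootSet ℂ ⊆ ball 0 1 := by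
  intro r hr
  rw [mem_rootSet, coe_aeval_eq_eval, eval_sub, eval_mul, eval_C, eval_pow, eval_X,
    sub_eq_zero] at hr
  rw [mem_ball_zero_iff]
  by_contra! hr₁
  have h := norm_eval_le_maxSphere_mul_pow hP hr₁
  rw [← hr.2, norm_mul, norm_pow] at h
  exact hc.not_ge (le_of_mul_le_mul_right h (pow_pos (by linarith) n))

lemma degree_C_mul_X_pow_sub_pos {n : ℕ} (hn : n ≠ 0) {P : ℂ[X]} (hP : P.natDegree ≤ n) {c : ℂ}
    (hc : maxSphere P < ‖c‖) : 0 < (C c * X ^ n - P).degree := by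
  have hcoeff : (C c * X ^ n - P).coeff n ≠ 0 := by
    rw [coeff_sub, coeff_C_mul_X_pow, if_pos rfl, sub_ne_zero]
    intro hc_eq
    exact hc.not_ge (hc_eq ▸ norm_coeff_le_maxSphere hP)
  exact natDegree_pos_iff_degree_pos.1 <|
    (Nat.pos_of_ne_zero hn).trans_le (le_natDegree_of_ne_zero hcoeff)

theorem Polynomial.mem_of_eval_derivative_eq_zero {P : ℂ[X]} (hP : 0 < P.degree) {s : Set ℂ}
    (hs : Convex ℝ s) (hroots : P.rootSet ℂ ⊆ s) {z : ℂ} (hz : P.derivative.eval z = 0) :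
    z ∈ s :=
  hs.convexHull_subset_iff.2 hroots <| rootSet_derivative_subset_convexHull_rootSet hP <|
    mem_rootSet.2 ⟨derivative_ne_zero.2 (natDegree_pos_iff_degree_pos.2 hP).ne', by simpa using hz⟩

theorem stmt_0 (n : ℕ) (P : Polynomial ℂ) (hP : P.natDegree ≤ n) :
    ∀ z : ℂ, ‖z‖ = 1 →
      ‖(derivative P).eval z‖ ≤ n * maxSphere P := by
  intro z hz
  by_contra! hlt
  have hn : n ≠ 0 := by
    rintro rfl
    rw [eq_C_of_natDegree_le_zero hP, derivative_C, eval_zero, norm_zero] at hlt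
    simp at hlt
  have hz₀ : z ≠ 0 := norm_ne_zero_iff.1 (by simp [hz])
  set c := P.derivative.eval z / (n * z ^ (n - 1))
  have hc : maxSphere P < ‖c‖ := by
    rw [norm_div, norm_mul, norm_pow, hz, one_pow, mul_one, Complex.norm_natCast,
      lt_div_iff₀ (by positivity)]
    linarith
  set Q := C c * X ^ n - P
  have hQ : 0 < Q.degree := degree_C_mul_X_pow_sub_pos hn hP hc
  have hQz : Q.derivative.eval z = 0 := by
    simp only [Q, c, derivative_sub, derivative_C_mul_X_pow, eval_sub, eval_mul, eval_C,
      eval_pow, eval_X]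
    field_simp
    ring
  have hz_ball := mem_of_eval_derivative_eq_zero hQ (convex_ball 0 1)
    (rootSet_C_mul_X_pow_sub_subset_ball hP hc) hQz
  simp [hz] at hz_ball
end

section
/- Let P be a polynomial of degree n with all zeros in the closed unit disk, and let p be a polynomial of degree at most n with |p(z)| ≤ |P(z)| for all |z| = 1. Then |p'(z)| ≤ |P'(z)| for all z with |z| ≥ 1. -/
open Polynomial Metric Set

/-!
Reflect through the unit circle: with `n = deg P`, the polynomials `u = zⁿ p(1/z)` and
`v = zⁿ P(1/z)` satisfy `|u| ≤ |v|` on the circle, and `v` has no zeros in the open disk.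
After cancelling the common zeros on the circle, the maximum modulus principle for `u / v`
gives `|u| ≤ |v|` on the closed disk, i.e. `|p| ≤ |P|` for `|z| ≥ 1` and `|pₙ| ≤ |Pₙ|`.
If `|p'(z)| > |P'(z)|` for some `|z| > 1`, then `q = P'(z) p - p'(z) P` has degree `n`, and
`|p| ≤ |P|` outside the disk forces all its zeros into the closed disk; but `q'(z) = 0`,
contradicting the Gauss–Lucas theorem. The case `|z| = 1` follows by continuity.
-/

lemma sphere_subset_closure_sphere_diff_singleton (c z₀ : ℂ) {r : ℝ} (hr : 0 < r) :
    sphere c r ⊆ closure (sphere c r \ {z₀}) := by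
  intro z hz
  by_cases hzz₀ : z = z₀
  · subst hzz₀
    have hnontriv : (sphere c r).Nontrivial :=
      ⟨c + r, by simp [abs_of_pos hr], c - r, by simp [abs_of_pos hr], by
        simp [Complex.ext_iff]; linarith⟩
    have hacc := (isPreconnected_sphere (by simp [Complex.rank_real_complex]) c r
      |>.preperfect_of_nontrivial hnontriv) z hz
    exact mem_closure_ne_iff_frequently_within.mpr (accPt_iff_frequently_nhdsNE.mp hacc)
  · exact subset_closure ⟨hz, hzz₀⟩

lemma mul_sub_mul_ne_zero_of_norm_lt {𝕜 : Type*} [NormedDivisionRing 𝕜] {a b x y : 𝕜}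
    (hab : ‖a‖ < ‖b‖) (hxy : ‖x‖ ≤ ‖y‖) (hy : y ≠ 0) : a * x - b * y ≠ 0 := by
  intro h
  have hnorm : ‖a‖ * ‖x‖ = ‖b‖ * ‖y‖ := by rw [← norm_mul, ← norm_mul, sub_eq_zero.mp h]
  have := mul_le_mul_of_nonneg_left hxy (norm_nonneg a)
  have := mul_lt_mul_of_pos_right hab (norm_pos_iff.mpr hy)
  linarith

namespace Polynomial

lemma ne_zero_of_forall_eval_eq_zero_norm_le_one {P : ℂ[X]} (h : ∀ z, P.eval z = 0 → ‖z‖ ≤ 1) :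
    P ≠ 0 :=
  fun h0 => absurd (h 2 (by simp [h0])) (by norm_num)

lemma eval_reflect_inv_mul_pow_s6 {K : Type*} [Field K] {f : K[X]} {N : ℕ} (hf : f.natDegree ≤ N)
    {x : K} (hx : x ≠ 0) : (reflect N f).eval x⁻¹ * x ^ N = f.eval x := by
  let := invertibleOfNonzero hx
  simpa [eval₂_eq_eval_map] using eval₂_reflect_mul_pow (RingHom.id K) x N f hf

lemma mem_of_eval_derivative_eq_zero_s6 {s : Set ℂ} (hs : Convex ℝ s) {Q : ℂ[X]} (hQ : 0 < Q.degree)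
    (hroots : ∀ w, Q.eval w = 0 → w ∈ s) {z : ℂ} (hz : (derivative Q).eval z = 0) : z ∈ s := by
  have hQ' : derivative Q ≠ 0 := by
    rw [Ne, derivative_eq_zero, ← Ne, ← pos_iff_ne_zero]
    exact natDegree_pos_iff_degree_pos.mpr hQ
  refine hs.convexHull_subset_iff.mpr (fun w hw => hroots w ?_)
    (rootSet_derivative_subset_convexHull_rootSet hQ (mem_rootSet.mpr ⟨hQ', by simpa using hz⟩))
  exact (mem_rootSet.mp hw).2

lemma norm_eval_le_on_sphere_of_mul_X_sub_C {a b : ℂ[X]} {z₀ : ℂ}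
    (h : ∀ z ∈ sphere (0 : ℂ) 1, ‖((X - C z₀) * a).eval z‖ ≤ ‖((X - C z₀) * b).eval z‖) :
    ∀ z ∈ sphere (0 : ℂ) 1, ‖a.eval z‖ ≤ ‖b.eval z‖ := by
  have hclosed : IsClosed {z : ℂ | ‖a.eval z‖ ≤ ‖b.eval z‖} :=
    isClosed_le (by fun_prop) (by fun_prop)
  refine fun z hz => hclosed.closure_subset_iff.mpr ?_
    (sphere_subset_closure_sphere_diff_singleton 0 z₀ one_pos hz)
  rintro w ⟨hw, hwz₀ : w ≠ z₀⟩
  have hprod := h w hw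
  simp only [eval_mul, eval_sub, eval_X, eval_C, norm_mul] at hprod
  exact le_of_mul_le_mul_left hprod (norm_pos_iff.mpr (sub_ne_zero.mpr hwz₀))

lemma norm_eval_le_on_closedBall_of_forall_ne_zero {u v : ℂ[X]}
    (hv : ∀ z ∈ closedBall (0 : ℂ) 1, v.eval z ≠ 0)
    (h : ∀ z ∈ sphere (0 : ℂ) 1, ‖u.eval z‖ ≤ ‖v.eval z‖) :
    ∀ z ∈ closedBall (0 : ℂ) 1, ‖u.eval z‖ ≤ ‖v.eval z‖ := by
  have hclosure : closure (ball (0 : ℂ) 1) = closedBall 0 1 := closure_ball 0 one_ne_zero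
  have hd : DiffContOnCl ℂ (fun w => u.eval w / v.eval w) (ball 0 1) := by
    refine DifferentiableOn.diffContOnCl ?_
    rw [hclosure]
    exact u.differentiable.differentiableOn.div v.differentiable.differentiableOn hv
  intro z hz
  have hquot : ‖u.eval z / v.eval z‖ ≤ 1 := by
    refine Complex.norm_le_of_forall_mem_frontier_norm_le isBounded_ball hd (fun w hw => ?_)
      (hclosure ▸ hz)
    rw [frontier_ball 0 one_ne_zero] at hw
    rw [norm_div, div_le_one (norm_pos_iff.mpr (hv w (sphere_subset_closedBall hw)))]
    exact h w hw
  rwa [norm_div, div_le_one (norm_pos_iff.mpr (hv z hz))] at hquot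

lemma norm_eval_le_on_closedBall {u v : ℂ[X]} (hv : ∀ z, v.eval z = 0 → 1 ≤ ‖z‖)
    (h : ∀ z ∈ sphere (0 : ℂ) 1, ‖u.eval z‖ ≤ ‖v.eval z‖) :
    ∀ z ∈ closedBall (0 : ℂ) 1, ‖u.eval z‖ ≤ ‖v.eval z‖ := by
  by_cases hroot : ∃ z₀ ∈ sphere (0 : ℂ) 1, v.eval z₀ = 0
  · obtain ⟨z₀, hz₀, hvz₀⟩ := hroot
    have huz₀ : u.eval z₀ = 0 := norm_le_zero_iff.mp (by simpa [hvz₀] using h z₀ hz₀)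
    obtain ⟨v', rfl⟩ := dvd_iff_isRoot.mpr hvz₀
    obtain ⟨u', rfl⟩ := dvd_iff_isRoot.mpr huz₀
    have hv' : ∀ z, v'.eval z = 0 → 1 ≤ ‖z‖ := fun z hz => hv z (by simp [hz])
    have hv'0 : v' ≠ 0 := fun h0 => absurd (hv' 0 (by simp [h0])) (by simp)
    -- `hdeg` is what `decreasing_tactic` uses for the recursive call below.
    have hdeg : v'.natDegree < ((X - C z₀) * v').natDegree := by
      rw [natDegree_mul (X_sub_C_ne_zero z₀) hv'0, natDegree_X_sub_C]
      omega
    have key := norm_eval_le_on_closedBall hv' (norm_eval_le_on_sphere_of_mul_X_sub_C h)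
    intro z hz
    simpa only [eval_mul, norm_mul] using mul_le_mul_of_nonneg_left (key z hz) (norm_nonneg _)
  · refine norm_eval_le_on_closedBall_of_forall_ne_zero (fun z hz hvz => hroot ⟨z, ?_, hvz⟩) h
    rw [mem_closedBall_zero_iff] at hz
    exact mem_sphere_zero_iff_norm.mpr (le_antisymm hz (hv z hvz))
termination_by v.natDegree

section Bernstein

variable {p P : ℂ[X]} (hzeros : ∀ z : ℂ, P.eval z = 0 → ‖z‖ ≤ 1) (hp : p.natDegree ≤ P.natDegree)
  (hle : ∀ z : ℂ, ‖z‖ = 1 → ‖p.eval z‖ ≤ ‖P.eval z‖)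
include hzeros hp hle

lemma norm_eval_reflect_le_on_closedBall :
    ∀ ζ ∈ closedBall (0 : ℂ) 1,
      ‖(reflect P.natDegree p).eval ζ‖ ≤ ‖(reflect P.natDegree P).eval ζ‖ := by
  have hP : P ≠ 0 := ne_zero_of_forall_eval_eq_zero_norm_le_one hzeros
  refine norm_eval_le_on_closedBall (fun ζ hζ => ?_) (fun ζ hζ => ?_)
  · rcases eq_or_ne ζ 0 with rfl | hζ0
    · rw [← coeff_zero_eq_eval_zero, coeff_reflect, revAt_zero, coeff_natDegree,
        leadingCoeff_eq_zero] at hζ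
      exact absurd hζ hP
    · have hroot := eval_reflect_inv_mul_pow_s6 (le_refl P.natDegree) (inv_ne_zero hζ0)
      rw [inv_inv, hζ, zero_mul, eq_comm] at hroot
      have := hzeros ζ⁻¹ hroot
      rwa [norm_inv, inv_le_one₀ (norm_pos_iff.mpr hζ0)] at this
  · rw [mem_sphere_zero_iff_norm] at hζ
    have hζ0 : ζ⁻¹ ≠ 0 := inv_ne_zero (norm_pos_iff.mp (by linarith))
    have hnorm : ‖ζ⁻¹‖ = 1 := by rw [norm_inv, hζ, inv_one]
    have hp' := congrArg norm (eval_reflect_inv_mul_pow_s6 hp hζ0)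
    have hP' := congrArg norm (eval_reflect_inv_mul_pow_s6 (le_refl P.natDegree) hζ0)
    simp only [inv_inv, norm_mul, norm_pow, hnorm, one_pow, mul_one] at hp' hP'
    rw [hp', hP']
    exact hle ζ⁻¹ hnorm

lemma norm_eval_le_of_one_le_norm {w : ℂ} (hw : 1 ≤ ‖w‖) : ‖p.eval w‖ ≤ ‖P.eval w‖ := by
  have hw0 : w ≠ 0 := norm_pos_iff.mp (by linarith)
  rw [← eval_reflect_inv_mul_pow_s6 hp hw0, ← eval_reflect_inv_mul_pow_s6 le_rfl hw0, norm_mul,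
    norm_mul]
  gcongr
  refine norm_eval_reflect_le_on_closedBall hzeros hp hle _ ?_
  rw [mem_closedBall_zero_iff, norm_inv]
  exact inv_le_one_of_one_le₀ hw

lemma norm_coeff_natDegree_le_norm_leadingCoeff : ‖p.coeff P.natDegree‖ ≤ ‖P.leadingCoeff‖ := by
  simpa [← coeff_zero_eq_eval_zero, coeff_reflect] using
    norm_eval_reflect_le_on_closedBall hzeros hp hle 0 (by simp)

lemma norm_eval_derivative_le_of_one_lt_norm {z : ℂ} (hz : 1 < ‖z‖) :
    ‖(derivative p).eval z‖ ≤ ‖(derivative P).eval z‖ := by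
  by_contra! hlt
  set a := (derivative P).eval z
  set b := (derivative p).eval z
  have hb : b ≠ 0 := norm_pos_iff.mp ((norm_nonneg a).trans_lt hlt)
  have hP : P ≠ 0 := ne_zero_of_forall_eval_eq_zero_norm_le_one hzeros
  have hn : 0 < P.natDegree := by
    refine hp.trans_lt' (Nat.pos_of_ne_zero fun hp0 => hb ?_)
    simp [b, derivative_eq_zero.mpr hp0]
  set q := C a * p - C b * P
  have hqcoeff : q.coeff P.natDegree ≠ 0 := by
    simpa [q, coeff_C_mul] using mul_sub_mul_ne_zero_of_norm_lt hlt
      (norm_coeff_natDegree_le_norm_leadingCoeff hzeros hp hle) (leadingCoeff_ne_zero.mpr hP)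
  have hqroots : ∀ w, q.eval w = 0 → w ∈ closedBall (0 : ℂ) 1 := by
    intro w hw
    by_contra! hw1
    rw [mem_closedBall_zero_iff, not_le] at hw1
    refine mul_sub_mul_ne_zero_of_norm_lt hlt (norm_eval_le_of_one_le_norm hzeros hp hle hw1.le)
      (fun hPw => ?_) (by simpa [q] using hw)
    linarith [hzeros w hPw]
  have hqz : (derivative q).eval z = 0 := by
    simp only [q, derivative_sub, derivative_C_mul, eval_sub, eval_mul, eval_C]
    ring
  have := mem_of_eval_derivative_eq_zero_s6 (convex_closedBall 0 1)
    ((Nat.cast_pos.mpr hn).trans_le (le_degree_of_ne_zero hqcoeff)) hqroots hqz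
  rw [mem_closedBall_zero_iff] at this
  linarith

end Bernstein

end Polynomial

theorem stmt_6 (n : ℕ) (P p : Polynomial ℂ) (hP : P.natDegree = n)
    (hzeros : ∀ z : ℂ, P.eval z = 0 → ‖z‖ ≤ 1)
    (hp : p.natDegree ≤ n)
    (hle : ∀ z : ℂ, ‖z‖ = 1 → ‖p.eval z‖ ≤ ‖P.eval z‖) :
    ∀ z : ℂ, 1 ≤ ‖z‖ →
      ‖(derivative p).eval z‖ ≤ ‖(derivative P).eval z‖ := by
  subst hP
  intro z hz
  have hclosed : IsClosed {w : ℂ | ‖(derivative p).eval w‖ ≤ ‖(derivative P).eval w‖} :=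
    isClosed_le (by fun_prop) (by fun_prop)
  have hz' : z ∈ closure (closedBall (0 : ℂ) 1)ᶜ := by
    rw [closure_compl, interior_closedBall _ one_ne_zero]
    simpa using hz
  refine hclosed.closure_subset_iff.mpr (fun w hw => ?_) hz'
  exact norm_eval_derivative_le_of_one_lt_norm hzeros hp hle (by simpa using hw)
end

section
/- Let P be a polynomial of degree n with all zeros in the closed unit disk and p a polynomial of degree at most n with |p(z)| ≤ |P(z)| on the unit circle. Then for every a in the closed unit disk and every z with |z| ≥ 1, |(1+az)p'(z) − n a p(z)| ≤ |(1+az)P'(z) − n a P(z)|. -/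
open Polynomial Metric Set

/-!
For `‖a‖ < 1 < ‖z‖` argue by contradiction. If `‖S̃p(z)‖ > ‖S̃P(z)‖`, then `c = S̃P(z) / S̃p(z)`
has `‖c‖ < 1` and `R = P - c p` satisfies `S̃R(z) = 0`. By the maximum modulus principle applied
to the reflected polynomials `wⁿ p(1/w)` and `wⁿ P(1/w)` on the unit disc, `R` still has degree `n`
and all its zeros in the closed disc. For such `R`,
`S̃R(z) = R(z) · ∑ (1 + a r) / (z - r)` over the zeros `r`, and each summand multiplied by
`z + ā` has positive real part, so `S̃R(z) ≠ 0`. The cases `‖a‖ = 1` or `‖z‖ = 1` follow by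
continuity, replacing `a, z` by `t a, z / t` and letting `t → 1⁻`.
-/

open ComplexConjugate

theorem le_of_forall_mem_Ioo_of_continuousAt {f g : ℝ → ℝ} {a b : ℝ} (hab : a < b)
    (hf : ContinuousAt f b) (hg : ContinuousAt g b) (h : ∀ t ∈ Ioo a b, f t ≤ g t) :
    f b ≤ g b :=
  le_of_tendsto_of_tendsto (hf.tendsto.mono_left nhdsWithin_le_nhds)
    (hg.tendsto.mono_left nhdsWithin_le_nhds) (Filter.mem_of_superset (Ioo_mem_nhdsLT hab) h)

namespace Complex

theorem norm_sub_le_norm_ofReal_mul_sub {w r : ℂ} (hw : ‖w‖ = 1) (hr : ‖r‖ ≤ 1) {s : ℝ}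
    (hs : 1 ≤ s) : ‖w - r‖ ≤ ‖(s : ℂ) * w - r‖ := by
  have hw' : w.re * w.re + w.im * w.im = 1 := by
    rw [← normSq_apply, ← Complex.sq_norm, hw, one_pow]
  have hr' : r.re * r.re + r.im * r.im ≤ 1 := by
    rw [← normSq_apply, ← Complex.sq_norm]
    nlinarith [norm_nonneg r]
  have hdot : w.re * r.re + w.im * r.im ≤ 1 := by
    nlinarith [sq_nonneg (w.re - r.re), sq_nonneg (w.im - r.im)]
  rw [← sq_le_sq₀ (norm_nonneg _) (norm_nonneg _), Complex.sq_norm, Complex.sq_norm]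
  simp only [normSq_apply, sub_re, sub_im, mul_re, mul_im, ofReal_re, ofReal_im]
  have hfactor : 0 ≤ (s - 1) * (s + 1 - 2 * (w.re * r.re + w.im * r.im)) :=
    mul_nonneg (sub_nonneg.mpr hs) (by linarith)
  linarith [congrArg (· * (s * s)) hw']

theorem norm_mul_add_one_lt_norm_conj_add {a z : ℂ} (ha : ‖a‖ < 1) (hz : 1 < ‖z‖) :
    ‖a * z + 1‖ < ‖conj z + a‖ := by
  have hid : normSq (conj z + a) - normSq (a * z + 1) = (1 - normSq a) * (normSq z - 1) := by
    simp only [normSq_apply, add_re, add_im, mul_re, mul_im, conj_re, conj_im, one_re, one_im]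
    ring
  have ha' : normSq a < 1 := by
    rw [normSq_eq_norm_sq]
    nlinarith [norm_nonneg a]
  have hz' : 1 < normSq z := by
    rw [normSq_eq_norm_sq]
    nlinarith
  rw [← sq_lt_sq₀ (norm_nonneg _) (norm_nonneg _), Complex.sq_norm, Complex.sq_norm]
  nlinarith [mul_pos (sub_pos.2 ha') (sub_pos.2 hz')]

theorem norm_conj_mul_sub_one_le_norm_sub {r z : ℂ} (hr : ‖r‖ ≤ 1) (hz : 1 ≤ ‖z‖) :
    ‖conj z * r - 1‖ ≤ ‖z - r‖ := by
  have hid : normSq (z - r) - normSq (conj z * r - 1) = (normSq z - 1) * (1 - normSq r) := by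
    simp only [normSq_apply, sub_re, sub_im, mul_re, mul_im, conj_re, conj_im, one_re, one_im]
    ring
  have hr' : normSq r ≤ 1 := by
    rw [normSq_eq_norm_sq]
    nlinarith [norm_nonneg r]
  have hz' : 1 ≤ normSq z := by
    rw [normSq_eq_norm_sq]
    nlinarith
  rw [← sq_le_sq₀ (norm_nonneg _) (norm_nonneg _), Complex.sq_norm, Complex.sq_norm]
  nlinarith [mul_nonneg (sub_nonneg.2 hz') (sub_nonneg.2 hr')]

theorem re_conj_add_mul_div_sub_pos {a r z : ℂ} (ha : ‖a‖ < 1) (hr : ‖r‖ ≤ 1) (hz : 1 < ‖z‖) :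
    0 < ((z + conj a) * ((1 + a * r) / (z - r))).re := by
  have hzr : z - r ≠ 0 := sub_ne_zero.mpr fun h => by rw [h] at hz; linarith
  have hza : conj z + a ≠ 0 := fun h => by
    have := congrArg norm (add_eq_zero_iff_eq_neg.mp h)
    rw [norm_conj, norm_neg] at this
    linarith
  set β := (a * z + 1) / (conj z + a)
  set γ := (conj z * r - 1) / (z - r)
  have hβγ : ‖β * γ‖ < 1 := by
    have hβ : ‖β‖ < 1 := by
      rw [norm_div, div_lt_one (norm_pos_iff.mpr hza)]
      exact norm_mul_add_one_lt_norm_conj_add ha hz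
    have hγ : ‖γ‖ ≤ 1 := by
      rw [norm_div, div_le_one (norm_pos_iff.mpr hzr)]
      exact norm_conj_mul_sub_one_le_norm_sub hr hz.le
    rw [norm_mul]
    nlinarith [norm_nonneg β, norm_nonneg γ]
  -- from `(1 + a r) (z z̄ - 1) = (z̄ + a) (z - r) + (a z + 1) (z̄ r - 1)`
  have key : (z + conj a) * ((1 + a * r) / (z - r)) * ((‖z‖ ^ 2 - 1 : ℝ) : ℂ) =
      (normSq (conj z + a) : ℂ) * (1 + β * γ) := by
    rw [← mul_conj, map_add, conj_conj, ofReal_sub, ofReal_pow, ← mul_conj', ofReal_one]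
    simp only [β, γ]
    field_simp
    ring
  have hre := congrArg re key
  rw [re_mul_ofReal, re_ofReal_mul] at hre
  have hpos : 0 < (1 + β * γ).re := by
    rw [add_re, one_re]
    linarith [neg_abs_le (β * γ).re, abs_re_le_norm (β * γ)]
  rw [← mul_pos_iff_of_pos_right (by nlinarith : 0 < ‖z‖ ^ 2 - 1), hre]
  exact mul_pos (normSq_pos.mpr hza) hpos

theorem norm_le_norm_of_forall_norm_eq_one {f g : ℂ → ℂ}
    (hf : DifferentiableOn ℂ f (closedBall 0 1)) (hg : DifferentiableOn ℂ g (closedBall 0 1))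
    (hg0 : ∀ w, ‖w‖ ≤ 1 → g w ≠ 0) (hfg : ∀ w, ‖w‖ = 1 → ‖f w‖ ≤ ‖g w‖)
    {w : ℂ} (hw : ‖w‖ ≤ 1) : ‖f w‖ ≤ ‖g w‖ := by
  have hquot : DiffContOnCl ℂ (fun w => f w / g w) (ball 0 1) := by
    apply DifferentiableOn.diffContOnCl
    rw [closure_ball 0 one_ne_zero]
    exact hf.div hg fun w hw => hg0 w (mem_closedBall_zero_iff.mp hw)
  have := norm_le_of_forall_mem_frontier_norm_le (C := 1) isBounded_ball hquot
    (fun u hu => ?_) (by rwa [closure_ball 0 one_ne_zero, mem_closedBall_zero_iff])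
  · rwa [norm_div, div_le_one (norm_pos_iff.mpr (hg0 w hw))] at this
  · rw [frontier_ball 0 one_ne_zero, mem_sphere_zero_iff_norm] at hu
    rw [norm_div, div_le_one (norm_pos_iff.mpr (hg0 u hu.le))]
    exact hfg u hu

end Complex

namespace Polynomial

theorem eval_reflect {K : Type*} [Field K] {p : K[X]} {n : ℕ} (hp : p.natDegree ≤ n) {w : K}
    (hw : w ≠ 0) : (reflect n p).eval w = w ^ n * p.eval w⁻¹ := by
  let := invertibleOfNonzero (inv_ne_zero hw)
  have h := eval₂_reflect_mul_pow (RingHom.id K) w⁻¹ n p hp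
  rw [invOf_eq_inv, inv_inv, eval₂_id, eval₂_id] at h
  rw [← h, inv_pow, mul_left_comm, mul_inv_cancel₀ (pow_ne_zero n hw), mul_one]

theorem eval_reflect_zero {R : Type*} [Semiring R] (p : R[X]) (n : ℕ) :
    (reflect n p).eval 0 = p.coeff n := by
  rw [← coeff_zero_eq_eval_zero, coeff_reflect, revAt_zero]

theorem forall_eval_reflect_ne_zero_iff {Q : ℂ[X]} {n : ℕ} (hQ : Q.natDegree ≤ n) :
    (∀ w : ℂ, ‖w‖ < 1 → (reflect n Q).eval w ≠ 0) ↔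
      Q.natDegree = n ∧ ∀ z, Q.eval z = 0 → ‖z‖ ≤ 1 := by
  constructor
  · intro h
    refine ⟨le_antisymm hQ (le_natDegree_of_ne_zero ?_), fun z hz => ?_⟩
    · simpa [eval_reflect_zero] using h 0 (by simp)
    · by_contra! hz1
      have hz0 : z ≠ 0 := by rintro rfl; simp at hz1; linarith
      apply h z⁻¹ (by rw [norm_inv]; exact inv_lt_one_of_one_lt₀ hz1)
      rw [eval_reflect hQ (inv_ne_zero hz0), inv_inv, hz, mul_zero]
  · rintro ⟨hdeg, hroots⟩ w hw
    have hQ0 : Q ≠ 0 := by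
      rintro rfl
      have := hroots 2 eval_zero
      norm_num at this
    rcases eq_or_ne w 0 with rfl | hw0
    · rw [eval_reflect_zero, ← hdeg]
      exact leadingCoeff_ne_zero.mpr hQ0
    · rw [eval_reflect hQ hw0]
      refine mul_ne_zero (pow_ne_zero n hw0) fun h => ?_
      have := hroots _ h
      rw [norm_inv] at this
      have := one_lt_inv_iff₀.mpr ⟨norm_pos_iff.mpr hw0, hw⟩
      linarith

theorem norm_eval_le_norm_eval_ofReal_mul {P : ℂ[X]} (hP : ∀ z, P.eval z = 0 → ‖z‖ ≤ 1)
    {w : ℂ} (hw : ‖w‖ = 1) {s : ℝ} (hs : 1 ≤ s) : ‖P.eval w‖ ≤ ‖P.eval (s * w)‖ := by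
  have hnorm (m : Multiset ℂ) : ‖m.prod‖ = (m.map (‖·‖)).prod :=
    map_multiset_prod (normHom : ℂ →*₀ ℝ) m
  simp only [(IsAlgClosed.splits P).eval_eq_prod_roots, norm_mul, hnorm, Multiset.map_map]
  gcongr
  refine Multiset.prod_map_le_prod_map₀ _ _ (fun _ _ => norm_nonneg _) fun r hr => ?_
  simpa using Complex.norm_sub_le_norm_ofReal_mul_sub hw (hP r (mem_roots'.mp hr).2) hs

theorem norm_eval_reflect_le {n : ℕ} {P p : ℂ[X]} (hP : P.natDegree = n)
    (hzeros : ∀ z, P.eval z = 0 → ‖z‖ ≤ 1) (hp : p.natDegree ≤ n)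
    (hle : ∀ z, ‖z‖ = 1 → ‖p.eval z‖ ≤ ‖P.eval z‖) {w : ℂ} (hw : ‖w‖ ≤ 1) :
    ‖(reflect n p).eval w‖ ≤ ‖(reflect n P).eval w‖ := by
  have hP0 := (forall_eval_reflect_ne_zero_iff hP.le).mpr ⟨hP, hzeros⟩
  -- `reflect n P` may vanish on the unit circle; its dilations `(reflect n P).eval (t * ·)` do not
  have hdilate : ∀ t ∈ Ioo (0 : ℝ) 1,
      t ^ n * ‖(reflect n p).eval w‖ ≤ ‖(reflect n P).eval (t * w)‖ := by
    rintro t ⟨ht0, ht1⟩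
    have htw {u : ℂ} (hu : ‖u‖ ≤ 1) : ‖(t : ℂ) * u‖ < 1 := by
      rw [norm_mul, Complex.norm_of_nonneg ht0.le]
      nlinarith [norm_nonneg u]
    have hcircle (u : ℂ) (hu : ‖u‖ = 1) :
        ‖(t : ℂ) ^ n * (reflect n p).eval u‖ ≤ ‖(reflect n P).eval (t * u)‖ := by
      have hu0 : u ≠ 0 := norm_ne_zero_iff.mp (by rw [hu]; exact one_ne_zero)
      have hinv : ‖u⁻¹‖ = 1 := by rw [norm_inv, hu, inv_one]
      rw [eval_reflect hp hu0, eval_reflect hP.le (mul_ne_zero (by exact_mod_cast ht0.ne') hu0),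
        mul_inv]
      simp only [norm_mul, norm_pow, hu, Complex.norm_of_nonneg ht0.le, one_pow, one_mul, mul_one,
        ← Complex.ofReal_inv]
      gcongr
      exact (hle _ hinv).trans (norm_eval_le_norm_eval_ofReal_mul hzeros hinv
        (one_le_inv_iff₀.mpr ⟨ht0, ht1.le⟩))
    have := Complex.norm_le_norm_of_forall_norm_eq_one
      (f := fun u => (t : ℂ) ^ n * (reflect n p).eval u) (g := fun u => (reflect n P).eval (t * u))
      (by fun_prop) (by fun_prop) (fun u hu => hP0 _ (htw hu)) hcircle hw
    simpa [abs_of_pos ht0] using this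
  simpa using le_of_forall_mem_Ioo_of_continuousAt zero_lt_one (by fun_prop) (by fun_prop) hdilate

/-- `smirnov n a q z` is `S̃_a[q](z)` for `q` regarded as a polynomial of degree at most `n`. -/
noncomputable def smirnov (n : ℕ) (a : ℂ) (q : ℂ[X]) (z : ℂ) : ℂ :=
  (1 + a * z) * (derivative q).eval z - n * a * q.eval z

theorem continuous_smirnov (n : ℕ) (q : ℂ[X]) :
    Continuous fun x : ℂ × ℂ => smirnov n x.1 q x.2 := by
  unfold smirnov
  fun_prop

theorem smirnov_sub_C_mul (n : ℕ) (a : ℂ) (P p : ℂ[X]) (c z : ℂ) :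
    smirnov n a (P - C c * p) z = smirnov n a P z - c * smirnov n a p z := by
  simp only [smirnov, derivative_sub, derivative_C_mul, eval_sub, eval_mul, eval_C]
  ring

theorem smirnov_zero_of_natDegree_eq_zero {q : ℂ[X]} (hq : q.natDegree = 0) (a z : ℂ) :
    smirnov 0 a q z = 0 := by
  rw [eq_C_of_natDegree_eq_zero hq]
  simp [smirnov]

theorem smirnov_eq_eval_mul_sum {n : ℕ} {R : ℂ[X]} (hR : R.natDegree = n) (a : ℂ) {z : ℂ}
    (hz : R.eval z ≠ 0) :
    smirnov n a R z = R.eval z * (R.roots.map fun r => (1 + a * r) / (z - r)).sum := by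
  have hsplit := IsAlgClosed.splits R
  have hterm : ∀ r ∈ R.roots, (1 + a * r) / (z - r) = (1 + a * z) * (1 / (z - r)) - a := by
    intro r hr
    have : z - r ≠ 0 := sub_ne_zero.mpr fun h => hz (h ▸ (mem_roots'.mp hr).2)
    field_simp
    ring
  rw [smirnov, hsplit.eval_derivative_eq_eval_mul_sum hz, Multiset.map_congr rfl hterm,
    Multiset.sum_map_sub, Multiset.sum_map_mul_left, Multiset.map_const', Multiset.sum_replicate,
    nsmul_eq_mul, ← hsplit.natDegree_eq_card_roots, hR]
  ring

theorem smirnov_ne_zero {n : ℕ} (hn : n ≠ 0) {R : ℂ[X]} (hR : R.natDegree = n)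
    (hroots : ∀ w, R.eval w = 0 → ‖w‖ ≤ 1) {a z : ℂ} (ha : ‖a‖ < 1) (hz : 1 < ‖z‖) :
    smirnov n a R z ≠ 0 := by
  have hRz : R.eval z ≠ 0 := fun h => (hroots z h).not_gt hz
  rw [smirnov_eq_eval_mul_sum hR a hRz]
  refine mul_ne_zero hRz fun hsum => ?_
  have hne : R.roots ≠ 0 := by
    rw [← Multiset.card_pos, ← (IsAlgClosed.splits R).natDegree_eq_card_roots, hR]
    exact Nat.pos_of_ne_zero hn
  have hpos : 0 < ((z + conj a) * (R.roots.map fun r => (1 + a * r) / (z - r)).sum).re := by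
    rw [← Multiset.sum_map_mul_left, ← Complex.coe_reAddGroupHom, map_multiset_sum,
      Multiset.map_map]
    simpa using Multiset.sum_lt_sum_of_nonempty (f := fun _ => (0 : ℝ)) hne fun r hr =>
      Complex.re_conj_add_mul_div_sub_pos ha (hroots r (mem_roots'.mp hr).2) hz
  simp [hsum] at hpos

theorem norm_smirnov_le_of_norm_lt_one {n : ℕ} {P p : ℂ[X]} (hP : P.natDegree = n)
    (hzeros : ∀ z, P.eval z = 0 → ‖z‖ ≤ 1) (hp : p.natDegree ≤ n)
    (hle : ∀ z, ‖z‖ = 1 → ‖p.eval z‖ ≤ ‖P.eval z‖) {a z : ℂ} (ha : ‖a‖ < 1) (hz : 1 < ‖z‖) :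
    ‖smirnov n a p z‖ ≤ ‖smirnov n a P z‖ := by
  by_contra! hlt
  have hSp : smirnov n a p z ≠ 0 := norm_pos_iff.mp ((norm_nonneg _).trans_lt hlt)
  set c := smirnov n a P z / smirnov n a p z
  have hc : ‖c‖ < 1 := by rwa [norm_div, div_lt_one (norm_pos_iff.mpr hSp)]
  have hP0 := (forall_eval_reflect_ne_zero_iff hP.le).mpr ⟨hP, hzeros⟩
  have hR : (P - C c * p).natDegree ≤ n :=
    (natDegree_sub_le _ _).trans (max_le hP.le ((natDegree_C_mul_le _ _).trans hp))
  obtain ⟨hRdeg, hRroots⟩ := (forall_eval_reflect_ne_zero_iff hR).mp fun w hw => by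
    rw [reflect_sub, reflect_C_mul, eval_sub, eval_mul, eval_C, sub_ne_zero]
    intro h
    have hpP := norm_eval_reflect_le hP hzeros hp hle hw.le
    have hPpos := norm_pos_iff.mpr (hP0 w hw)
    rw [h, norm_mul] at hPpos hpP
    nlinarith [norm_nonneg c]
  have hn : n ≠ 0 := by
    rintro rfl
    exact hSp (smirnov_zero_of_natDegree_eq_zero (Nat.le_zero.mp hp) a z)
  apply smirnov_ne_zero hn hRdeg hRroots ha hz
  rw [smirnov_sub_C_mul, div_mul_cancel₀ _ hSp, sub_self]

end Polynomial

theorem stmt_7 (n : ℕ) (P p : Polynomial ℂ) (hP : P.natDegree = n)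
    (hzeros : ∀ z : ℂ, P.eval z = 0 → ‖z‖ ≤ 1)
    (hp : p.natDegree ≤ n)
    (hle : ∀ z : ℂ, ‖z‖ = 1 → ‖p.eval z‖ ≤ ‖P.eval z‖)
    (a : ℂ) (ha : ‖a‖ ≤ 1) :
    ∀ z : ℂ, 1 ≤ ‖z‖ →
      ‖(1 + a * z) * (derivative p).eval z - n * a * p.eval z‖ ≤
        ‖(1 + a * z) * (derivative P).eval z - n * a * P.eval z‖ := by
  intro z hz
  have hpath : ContinuousAt (fun t : ℝ => ((t : ℂ) * a, z / t)) 1 := by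
    fun_prop (disch := norm_num)
  have hcont (q : ℂ[X]) : ContinuousAt (fun t : ℝ => ‖smirnov n (t * a) q (z / t)‖) 1 :=
    ((continuous_smirnov n q).continuousAt.comp hpath).norm
  have key := le_of_forall_mem_Ioo_of_continuousAt zero_lt_one (hcont p) (hcont P)
    fun t ⟨ht0, ht1⟩ => norm_smirnov_le_of_norm_lt_one hP hzeros hp hle
      (by rw [norm_mul, Complex.norm_of_nonneg ht0.le]; nlinarith [norm_nonneg a])
      (by rw [norm_div, Complex.norm_of_nonneg ht0.le, lt_div_iff₀ ht0]; nlinarith)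
  simpa only [Complex.ofReal_one, one_mul, div_one, smirnov] using key
end

section
/- Let P be a polynomial of degree n with all zeros in the closed unit disk, and let a be in the closed unit disk such that (1+az)P'(z) − naP(z) is not identically zero (a is not an exceptional value). Then all zeros of the polynomial z ↦ (1+az)P'(z) − n a P(z) lie in the closed unit disk. -/
open Polynomial Metric Set
open ComplexConjugate

private lemma deriv_prod_eval (z : ℂ) (R : Multiset ℂ) (h : ∀ r ∈ R, z - r ≠ 0) :
    eval z (derivative ((R.map (fun r => X - C r)).prod)) =
    eval z ((R.map (fun r => X - C r)).prod) * (R.map (fun r => (z - r)⁻¹)).sum := by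
  induction R using Multiset.induction_on with
  | empty => simp
  | cons r R ih =>
    have hr : z - r ≠ 0 := h r (Multiset.mem_cons_self r R)
    have ih' := ih (fun s hs => h s (Multiset.mem_cons_of_mem hs))
    simp only [Multiset.map_cons, Multiset.prod_cons, Multiset.sum_cons, derivative_mul,
      eval_add, eval_mul, ih']
    simp only [derivative_sub, derivative_X, derivative_C, sub_zero, eval_one, eval_sub,
      eval_X, eval_C]
    field_simp

private lemma sum_nonneg_all_zero {R : Multiset ℂ} (g : ℂ → ℝ)
    (h0 : ∀ r ∈ R, 0 ≤ g r) (hs : (R.map g).sum ≤ 0) : ∀ r ∈ R, g r = 0 := by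
  induction R using Multiset.induction_on with
  | empty => simp
  | cons r R ih =>
    have h1 : 0 ≤ g r := h0 r (Multiset.mem_cons_self r R)
    have h2 : ∀ s ∈ R, 0 ≤ g s := fun s hs => h0 s (Multiset.mem_cons_of_mem hs)
    have h3 : 0 ≤ (R.map g).sum := Multiset.sum_nonneg (by
      intro x hx
      obtain ⟨s, hs, rfl⟩ := Multiset.mem_map.mp hx
      exact h2 s hs)
    simp only [Multiset.map_cons, Multiset.sum_cons] at hs
    intro s hsmem
    rcases Multiset.mem_cons.mp hsmem with rfl | hmem
    · linarith
    · exact ih h2 (by linarith) s hmem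

private lemma gsum_helper (R : Multiset ℂ) (A : ℝ) (h : ℂ → ℝ) :
    (R.map fun r => A - h r).sum = (Multiset.card R : ℝ) * A - (R.map h).sum := by
  induction R using Multiset.induction_on with
  | empty => simp
  | cons r R ih =>
    simp only [Multiset.map_cons, Multiset.sum_cons, Multiset.card_cons, ih]
    push_cast
    ring

private lemma re_multiset_sum (R : Multiset ℂ) : R.sum.re = (R.map Complex.re).sum := by
  induction R using Multiset.induction_on with
  | empty => simp
  | cons r R ih => simp [ih]

set_option maxHeartbeats 1000000 in
theorem stmt_8 (n : ℕ) (P : Polynomial ℂ) (hP : P.natDegree = n)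
    (hzeros : ∀ z : ℂ, P.eval z = 0 → ‖z‖ ≤ 1)
    (a : ℂ) (ha : ‖a‖ ≤ 1)
    (hexc : (1 + C a * X) * derivative P - C ((n : ℂ) * a) * P ≠ 0) :
    ∀ z : ℂ, ((1 + C a * X) * derivative P - C ((n : ℂ) * a) * P).eval z = 0 →
      ‖z‖ ≤ 1 := by
  intro z heval
  by_contra hgt
  push_neg at hgt
  -- P ≠ 0
  have hP0 : P ≠ 0 := by
    rintro rfl
    exact hexc (by simp)
  -- n ≥ 1
  have hn : 1 ≤ n := by
    by_contra hn
    push_neg at hn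
    interval_cases n
    have hPc : P = C (P.coeff 0) := Polynomial.eq_C_of_natDegree_eq_zero hP
    apply hexc
    rw [hPc]
    simp
  have hnC : (n : ℂ) ≠ 0 := Nat.cast_ne_zero.mpr (by omega)
  -- P z ≠ 0
  have hPz : P.eval z ≠ 0 := fun h => absurd (hzeros z h) (not_le.mpr hgt)
  set R : Multiset ℂ := P.roots with hR
  have hcard : Multiset.card R = n := by
    rw [hR, ← hP]
    exact (Polynomial.splits_iff_card_roots.mp (IsAlgClosed.splits P))
  have hfac := Polynomial.C_leadingCoeff_mul_prod_multiset_X_sub_C (p := P) (by rw [← hR, hcard, hP])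
  have hroot_le : ∀ r ∈ R, ‖r‖ ≤ 1 := by
    intro r hr
    exact hzeros r (Polynomial.isRoot_of_mem_roots hr)
  have hzr : ∀ r ∈ R, z - r ≠ 0 := by
    intro r hr h
    have : r = z := by linear_combination -h
    rw [this] at hr
    exact absurd (hroot_le z (this ▸ hr)) (not_le.mpr hgt)
  set Ssum : ℂ := (R.map (fun r => (z - r)⁻¹)).sum with hSsum
  -- derivative formula
  have hderiv : eval z (derivative P) = P.eval z * Ssum := by
    conv_lhs => rw [← hfac]
    rw [derivative_C_mul, eval_C_mul, deriv_prod_eval z R hzr]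
    conv_rhs => rw [← hfac]
    rw [eval_C_mul]
    ring
  -- the equation at z
  have key : (1 + a * z) * Ssum = (n : ℂ) * a := by
    simp only [eval_sub, eval_mul, eval_add, eval_one, eval_C, eval_X, hderiv] at heval
    have h2 : P.eval z * ((1 + a * z) * Ssum - (n : ℂ) * a) = 0 := by linear_combination heval
    rcases mul_eq_zero.mp h2 with h | h
    · exact absurd h hPz
    · linear_combination h
  have h1az : 1 + a * z ≠ 0 := by
    intro h
    rw [h, zero_mul] at key
    rcases mul_eq_zero.mp key.symm with h' | h'
    · exact hnC h'
    · rw [h'] at h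
      simp at h
  set m : ℝ := Complex.normSq z with hm'
  have hm : 1 < m := by
    rw [hm', ← Complex.sq_norm]
    nlinarith [norm_nonneg z, hgt]
  have hm2 : 1 < z.re * z.re + z.im * z.im := by
    have h := hm
    rw [hm', Complex.normSq_apply] at h
    exact h
  have hmz : ((m : ℂ)) = conj z * z := by
    rw [hm', Complex.normSq_eq_conj_mul_self]
  set w : ℂ := -(a + conj z) / (1 + a * z) with hw'
  set v : ℂ → ℂ := fun r => ((m : ℂ) - 1) * (z - r)⁻¹ - conj z with hv'
  -- each v r has modulus ≤ 1
  have hv1 : ∀ r ∈ R, ‖v r‖ ≤ 1 := by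
    intro r hr
    have hzr' := hzr r hr
    have hvr : v r = (conj z * r - 1) / (z - r) := by
      simp only [hv']
      field_simp
      linear_combination hmz
    rw [hvr, norm_div]
    rw [div_le_one (norm_pos_iff.mpr hzr')]
    have h1 : Complex.normSq (conj z * r - 1) ≤ Complex.normSq (z - r) := by
      have hr1 : Complex.normSq r ≤ 1 := by
        rw [← Complex.sq_norm]
        nlinarith [hroot_le r hr, norm_nonneg r]
      simp only [Complex.normSq_apply, Complex.sub_re, Complex.sub_im, Complex.mul_re,
        Complex.mul_im, Complex.conj_re, Complex.conj_im, Complex.one_re, Complex.one_im] at hr1 ⊢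
      nlinarith [hm2, hr1]
    have := Real.sqrt_le_sqrt h1
    rwa [← Complex.norm_def, ← Complex.norm_def] at this
  -- sum of v
  have hSval : Ssum = (n : ℂ) * a / (1 + a * z) := by
    field_simp
    linear_combination key
  have hvsum : (R.map v).sum = (n : ℂ) * w := by
    have h1 : (R.map v).sum = ((m : ℂ) - 1) * Ssum - (n : ℂ) * conj z := by
      rw [hv']
      rw [show (R.map fun r => ((m : ℂ) - 1) * (z - r)⁻¹ - conj z)
          = (R.map fun r => ((m : ℂ) - 1) * (z - r)⁻¹ + (- conj z)) from rfl]
      rw [Multiset.sum_map_add, Multiset.sum_map_mul_left, Multiset.map_const', Multiset.sum_replicate,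
        hcard, hSsum]
      push_cast
      ring
    rw [h1, hSval, hw', hmz]
    rw [div_eq_mul_inv, div_eq_mul_inv]
    have e : (1 + a * z) * (1 + a * z)⁻¹ = 1 := mul_inv_cancel₀ h1az
    linear_combination ((n : ℂ) * conj z) * e
  have habs1az : 0 < ‖1 + a * z‖ := by
    simpa [norm_pos_iff] using h1az
  -- |w| ≥ 1
  have hwge : 1 ≤ ‖w‖ := by
    have h1 : Complex.normSq (1 + a * z) ≤ Complex.normSq (a + conj z) := by
      have ha1 : Complex.normSq a ≤ 1 := by
        rw [← Complex.sq_norm]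
        nlinarith [norm_nonneg a]
      simp only [Complex.normSq_apply, Complex.add_re, Complex.add_im, Complex.mul_re,
        Complex.mul_im, Complex.conj_re, Complex.conj_im, Complex.one_re, Complex.one_im] at ha1 ⊢
      nlinarith [hm2, ha1]
    have h2 : ‖1 + a * z‖ ≤ ‖a + conj z‖ := by
      have := Real.sqrt_le_sqrt h1
      rwa [← Complex.norm_def, ← Complex.norm_def] at this
    rw [hw', norm_div, norm_neg]
    rw [le_div_iff₀ habs1az]
    linarith
  have hwne : w ≠ 0 := by
    intro h
    rw [h, norm_zero] at hwge
    linarith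
  -- the deficiency function
  set g : ℂ → ℝ := fun r => ‖w‖ - (conj w * v r).re with hg'
  have hg0 : ∀ r ∈ R, 0 ≤ g r := by
    intro r hr
    have h1 : (conj w * v r).re ≤ ‖conj w * v r‖ := Complex.re_le_norm _
    have h2 : ‖conj w * v r‖ = ‖w‖ * ‖v r‖ := by
      rw [norm_mul, Complex.norm_conj]
    have h3 : ‖w‖ * ‖v r‖ ≤ ‖w‖ * 1 := by
      exact mul_le_mul_of_nonneg_left (hv1 r hr) (norm_nonneg w)
    rw [hg']
    simp only
    nlinarith
  have hf4 : (R.map fun r => (conj w * v r).re).sum = (n : ℝ) * Complex.normSq w := by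
    have e1 : (R.map fun r => (conj w * v r).re).sum = ((R.map fun r => conj w * v r).sum).re := by
      rw [re_multiset_sum, Multiset.map_map]
      rfl
    rw [e1, Multiset.sum_map_mul_left, hvsum]
    have e2 : conj w * ((n : ℂ) * w) = (((n : ℝ) * Complex.normSq w : ℝ) : ℂ) := by
      push_cast
      rw [Complex.normSq_eq_conj_mul_self]
      ring
    rw [e2, Complex.ofReal_re]
  have hgsum : (R.map g).sum = (n : ℝ) * ‖w‖ - (n : ℝ) * Complex.normSq w := by
    simp only [hg']
    rw [gsum_helper R (‖w‖) (fun r => (conj w * v r).re), hcard, hf4]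
  have hnR : (0:ℝ) < n := by positivity
  have hsum_le : (R.map g).sum ≤ 0 := by
    rw [hgsum]
    have : ‖w‖ ≤ Complex.normSq w := by
      rw [← Complex.sq_norm]
      nlinarith
    nlinarith
  -- all g r = 0, and |w| = 1
  have hall := sum_nonneg_all_zero g hg0 hsum_le
  have hweq : ‖w‖ = 1 := by
    have hsum0 : (R.map g).sum = 0 := by
      have h3 : 0 ≤ (R.map g).sum := Multiset.sum_nonneg (by
        intro x hx
        obtain ⟨s, hs, rfl⟩ := Multiset.mem_map.mp hx
        exact hg0 s hs)
      linarith
    rw [hgsum, ← Complex.sq_norm w] at hsum0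
    have h7 : (n : ℝ) * (‖w‖ - ‖w‖ ^ 2) = 0 := by linear_combination hsum0
    rcases mul_eq_zero.mp h7 with h | h
    · exact absurd h (ne_of_gt hnR)
    · have h9 : ‖w‖ * (‖w‖ - 1) = 0 := by linear_combination -h
      rcases mul_eq_zero.mp h9 with h' | h'
      · linarith
      · linarith
  -- each v r = w
  have hveq : ∀ r ∈ R, v r = w := by
    intro r hr
    have h1 : g r = 0 := hall r hr
    simp only [hg', hweq] at h1
    have h2 : (conj w * v r).re = 1 := by linarith
    have h3 : ‖conj w * v r‖ ≤ 1 := by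
      rw [norm_mul, Complex.norm_conj, hweq, one_mul]
      exact hv1 r hr
    have h4 : conj w * v r = 1 := by
      have him : (conj w * v r).im = 0 := by
        have := Complex.sq_norm (conj w * v r)
        rw [Complex.normSq_apply] at this
        nlinarith [norm_nonneg (conj w * v r)]
      apply Complex.ext <;> simp [h2, him]
    have hnsq : Complex.normSq w = 1 := by
      rw [← Complex.sq_norm, hweq]
      norm_num
    have h5 : w * (conj w * v r) = w := by rw [h4, mul_one]
    rw [← mul_assoc, Complex.mul_conj, hnsq] at h5
    simpa using h5
  -- all roots are equal
  obtain ⟨r₀, hr₀⟩ : ∃ r₀, r₀ ∈ R := by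
    rw [← Multiset.card_pos_iff_exists_mem, hcard]
    omega
  have hrep : R = Multiset.replicate n r₀ := by
    rw [← hcard]
    rw [Multiset.eq_replicate_card]
    intro r hr
    have h1 := hveq r hr
    have h2 := hveq r₀ hr₀
    rw [← h2] at h1
    rw [hv'] at h1
    simp only at h1
    have h3 : ((m:ℂ) - 1) * (z - r)⁻¹ = ((m:ℂ) - 1) * (z - r₀)⁻¹ := by linear_combination h1
    have hm1 : ((m:ℂ) - 1) ≠ 0 := by
      intro h
      have : (m:ℂ) = 1 := by linear_combination h
      have : m = 1 := by exact_mod_cast this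
      linarith
    have h4 : (z - r)⁻¹ = (z - r₀)⁻¹ := mul_left_cancel₀ hm1 h3
    have h5 : z - r = z - r₀ := inv_injective h4
    linear_combination -h5
  -- the relation a * r₀ = -1
  have har : a * r₀ = -1 := by
    have hS2 : Ssum = (n : ℂ) * (z - r₀)⁻¹ := by
      rw [hSsum, hrep, Multiset.map_replicate, Multiset.sum_replicate, nsmul_eq_mul]
    have hzr0 : z - r₀ ≠ 0 := hzr r₀ hr₀
    rw [hS2] at key
    have e : (z - r₀)⁻¹ * (z - r₀) = 1 := inv_mul_cancel₀ hzr0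
    have h1 : (1 + a * z) * (n : ℂ) = (n : ℂ) * a * (z - r₀) := by
      linear_combination (z - r₀) * key + (-(1 + a * z) * (n : ℂ)) * e
    have h2 : (n : ℂ) * (1 + a * z - a * (z - r₀)) = 0 := by linear_combination h1
    rcases mul_eq_zero.mp h2 with h | h
    · exact absurd h hnC
    · linear_combination h
  -- P is c * (X - r₀)^n ; then the operator annihilates P, contradiction
  obtain ⟨k, hk⟩ : ∃ k, n = k + 1 := ⟨n - 1, by omega⟩
  apply hexc
  have hrep' : P.roots = Multiset.replicate n r₀ := by
    rw [← hR]
    exact hrep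
  have hPform : P = C P.leadingCoeff * (X - C r₀) ^ n := by
    conv_lhs => rw [← hfac]
    rw [hrep', Multiset.map_replicate, Multiset.prod_replicate]
  rw [hPform, hk]
  rw [derivative_C_mul, derivative_pow]
  simp only [Nat.add_sub_cancel, derivative_sub, derivative_X, derivative_C, sub_zero, mul_one]
  have hc : C a * C r₀ = -1 := by
    rw [← C_mul, har]
    simp
  push_cast
  rw [pow_succ]
  simp only [C_mul]
  linear_combination (C P.leadingCoeff * C ((k:ℂ)+1) * (X - C r₀) ^ k) * hc
end

section
/- If p is a polynomial of degree n having all its zeros in the disk |z| ≤ k where k ≥ 0, then for every R ≥ r > 0 with rR ≥ k², and every z with |z| = 1, |p(Rz)| ≥ ((R+k)/(r+k))^n |p(rz)|. -/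
/-!
Over `ℂ`, `‖p(x)‖ = ‖lc p‖ * ∏ ‖x - a‖` over the roots `a`, so it suffices to compare a single
linear factor: for `‖z‖ = 1` and `‖a‖ ≤ k`, `(R + k) ‖rz - a‖ ≤ (r + k) ‖Rz - a‖`. Squaring, with
`s = ‖a‖` and `t = Re (z * conj a)`, the right side minus the left side is
`2 (R - r)(rR - k²)(t + s) + (R - r)(k - s)((r + k)(R + s) + (R + k)(r + s))`,
which is nonnegative because `|t| ≤ s ≤ k`.
-/

open Polynomial Metric Set

open ComplexConjugate

theorem Polynomial.Splits.norm_eval_eq_prod_roots {𝕜 : Type*} [NormedField 𝕜] {p : 𝕜[X]}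
    (hp : p.Splits) (x : 𝕜) :
    ‖p.eval x‖ = ‖p.leadingCoeff‖ * (p.roots.map fun a => ‖x - a‖).prod := by
  rw [hp.eval_eq_prod_roots, norm_mul, ← normHom_apply, ← normHom_apply, map_multiset_prod,
    Multiset.map_map]
  rfl

theorem Polynomial.Splits.pow_natDegree_mul_norm_eval_le {𝕜 : Type*} [NormedField 𝕜]
    {p : 𝕜[X]} (hp : p.Splits) {x y : 𝕜} {c : ℝ} (hc : 0 ≤ c)
    (h : ∀ a ∈ p.roots, c * ‖x - a‖ ≤ ‖y - a‖) :
    c ^ p.natDegree * ‖p.eval x‖ ≤ ‖p.eval y‖ := by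
  have hpow : c ^ p.natDegree = (p.roots.map fun _ => c).prod := by
    rw [Multiset.map_const', Multiset.prod_replicate, ← splits_iff_card_roots.mp hp]
  rw [hp.norm_eval_eq_prod_roots, hp.norm_eval_eq_prod_roots, hpow, mul_left_comm,
    ← Multiset.prod_map_mul]
  gcongr
  exact Multiset.prod_map_le_prod_map₀ _ _ (fun a _ => by positivity) h

theorem Complex.norm_ofReal_mul_sub_sq {z : ℂ} (hz : ‖z‖ = 1) (c : ℝ) (w : ℂ) :
    ‖(c : ℂ) * z - w‖ ^ 2 = c ^ 2 - 2 * c * (z * conj w).re + ‖w‖ ^ 2 := by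
  rw [← Complex.normSq_eq_norm_sq, Complex.normSq_sub, Complex.normSq_mul,
    Complex.normSq_ofReal, Complex.normSq_eq_norm_sq z, hz, mul_assoc (c : ℂ),
    Complex.re_ofReal_mul, Complex.normSq_eq_norm_sq]
  ring

theorem Complex.div_mul_norm_ofReal_mul_sub_le {k r R : ℝ} (hr : 0 < r) (hrR : r ≤ R)
    (hkr : k ^ 2 ≤ r * R) {z w : ℂ} (hz : ‖z‖ = 1) (hw : ‖w‖ ≤ k) :
    (R + k) / (r + k) * ‖(r : ℂ) * z - w‖ ≤ ‖(R : ℂ) * z - w‖ := by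
  have hk : 0 ≤ k := (norm_nonneg w).trans hw
  have hR : 0 < R := hr.trans_le hrR
  set s := ‖w‖
  set t := (z * conj w).re
  have hts : -s ≤ t := by
    have : |t| ≤ s := by
      simpa only [norm_mul, Complex.norm_conj, hz, one_mul] using
        Complex.abs_re_le_norm (z * conj w)
    exact neg_le_of_abs_le this
  have hsq : ((R + k) * ‖(r : ℂ) * z - w‖) ^ 2 ≤ ((r + k) * ‖(R : ℂ) * z - w‖) ^ 2 := by
    rw [mul_pow, mul_pow, norm_ofReal_mul_sub_sq hz, norm_ofReal_mul_sub_sq hz]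
    have h₁ : 0 ≤ 2 * (R - r) * (r * R - k ^ 2) * (t + s) := by
      have := sub_nonneg.2 hrR
      have := sub_nonneg.2 hkr
      have : 0 ≤ t + s := by linarith
      positivity
    have h₂ : 0 ≤ (R - r) * (k - s) * ((r + k) * (R + s) + (R + k) * (r + s)) := by
      have := sub_nonneg.2 hrR
      have := sub_nonneg.2 hw
      have : 0 ≤ s := norm_nonneg w
      positivity
    linear_combination h₁ + h₂
  rw [div_mul_eq_mul_div, div_le_iff₀ (by positivity), mul_comm _ (r + k)]
  exact (sq_le_sq₀ (by positivity) (by positivity)).1 hsq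

theorem stmt_9 (n : ℕ) (p : Polynomial ℂ) (hp : p.natDegree = n)
    (k : ℝ) (hk : 0 ≤ k)
    (hzeros : ∀ z : ℂ, p.eval z = 0 → ‖z‖ ≤ k)
    (r R : ℝ) (hr : 0 < r) (hrR : r ≤ R) (hkr : k ^ 2 ≤ r * R) :
    ∀ z : ℂ, ‖z‖ = 1 →
      ((R + k) / (r + k)) ^ n * ‖p.eval (r * z)‖ ≤
        ‖p.eval (R * z)‖ := by
  intro z hz
  have hR : 0 ≤ R := hr.le.trans hrR
  subst hp
  refine (IsAlgClosed.splits p).pow_natDegree_mul_norm_eval_le (by positivity) fun a ha => ?_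
  exact Complex.div_mul_norm_ofReal_mul_sub_le hr hrR hkr hz (hzeros a (mem_roots'.1 ha).2)
end

section
/- Let P be a polynomial of degree n with all zeros in the open unit disk and p a polynomial with deg p ≤ n and |p(z)| ≤ |P(z)| on |z| = 1. Then for every β ∈ ℂ with |β| ≤ 1, every R ≥ 1, every a with |a| ≤ 1, and every z with |z| = 1: |S̃_a[p](Rz) − β S̃_a[p](z)| ≤ |S̃_a[P](Rz) − β S̃_a[P](z)|. -/
/-!
Write `T q` for the left-hand side as a function of `q`: it is linear in `q`, and it is `S̃_a`
applied to `F q (w) = q (R w) - β q (w)`. If `q` has degree `n` and all its zeros in the open unit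
disk, then so does `F q`, because `|q (R w)| > |q w|` for `|w| ≥ 1` (compare factor by factor).
For such an `F`, `S̃_a[F](z) / F(z) = ∑ (1 + a r) / (z - r)` over the zeros `r` of `F`, and all
these terms lie in one open half-plane, so `S̃_a[F](z) ≠ 0`. Thus `T` vanishes at no such `q`.

Now if `|T p| > |T P|`, put `λ = T p / T P`, so `|λ| > 1`. The maximum principle, applied to
`p* / P*` for the reversed polynomials, shows that `|p| ≤ |P|` persists outside the unit disk and
for the leading coefficients; hence `p - λ P` has degree `n` and all zeros in the open unit disk,
while `T (p - λ P) = 0`.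
-/

open Polynomial Metric Set

open ComplexConjugate

def RootsInUnitBall (h : ℂ[X]) : Prop := ∀ z : ℂ, h.eval z = 0 → ‖z‖ < 1

lemma RootsInUnitBall.eval_ne_zero {h : ℂ[X]} (hh : RootsInUnitBall h) {z : ℂ} (hz : 1 ≤ ‖z‖) :
    h.eval z ≠ 0 :=
  fun h0 => (hh z h0).not_ge hz

/-- The paper's `S̃_a`: `-a` times the polar derivative of `q` with respect to `-1/a`
(for `a = 0`, simply `q'`). -/
noncomputable def polarDeriv (a : ℂ) (n : ℕ) (z : ℂ) : ℂ[X] →ₗ[ℂ] ℂ :=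
  (1 + a * z) • (leval z ∘ₗ derivative) - ((n : ℂ) * a) • leval z

@[simp]
lemma polarDeriv_apply (a : ℂ) (n : ℕ) (z : ℂ) (q : ℂ[X]) :
    polarDeriv a n z q = (1 + a * z) * (derivative q).eval z - n * a * q.eval z := by
  simp [polarDeriv]

lemma polarDeriv_X_sub_C_mul (a : ℂ) (n : ℕ) (z r : ℂ) (q : ℂ[X]) :
    polarDeriv a (n + 1) z ((X - C r) * q) =
      (z - r) * polarDeriv a n z q + (1 + a * r) * q.eval z := by
  simp only [polarDeriv_apply, derivative_mul, derivative_sub, derivative_X, derivative_C,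
    sub_zero, one_mul, eval_add, eval_mul, eval_sub, eval_X, eval_C]
  push_cast
  ring

lemma two_mul_re_conj_one_add_mul (b u : ℂ) :
    2 * (conj (1 + b) * (1 + b * u) * conj (1 - u)).re =
      (1 - ‖b‖ ^ 2) * ‖1 - u‖ ^ 2 + ‖1 + b‖ ^ 2 * (1 - ‖u‖ ^ 2) := by
  simp only [Complex.sq_norm, Complex.normSq_apply, Complex.mul_re, Complex.mul_im,
    Complex.add_re, Complex.add_im, Complex.sub_re, Complex.sub_im, Complex.conj_re,
    Complex.conj_im, Complex.one_re, Complex.one_im]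
  ring

lemma re_conj_one_add_mul_pos {a z r : ℂ} (ha : ‖a‖ ≤ 1) (hz : ‖z‖ = 1) (hr : ‖r‖ < 1)
    (haz : 1 + a * z ≠ 0) :
    0 < (conj (1 + a * z) * z * ((1 + a * r) * conj (z - r))).re := by
  have hzz : z * conj z = 1 := by
    rw [Complex.mul_conj, Complex.normSq_eq_norm_sq, hz]; norm_num
  have hsubst : conj (1 + a * z) * z * ((1 + a * r) * conj (z - r)) =
      conj (1 + a * z) * (1 + a * z * (r * conj z)) * conj (1 - r * conj z) := by
    simp only [map_sub, map_mul, map_one, Complex.conj_conj]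
    linear_combination conj (1 + a * z) * (1 + a * r * conj r * z) * hzz
  have hu : ‖r * conj z‖ < 1 := by rwa [norm_mul, Complex.norm_conj, hz, mul_one]
  have hb : ‖a * z‖ ≤ 1 := by rwa [norm_mul, hz, mul_one]
  have h1 : 0 ≤ (1 - ‖a * z‖ ^ 2) * ‖1 - r * conj z‖ ^ 2 := by
    have : ‖a * z‖ ^ 2 ≤ 1 := pow_le_one₀ (norm_nonneg _) hb
    positivity
  have h2 : 0 < ‖1 + a * z‖ ^ 2 * (1 - ‖r * conj z‖ ^ 2) := by
    have : ‖r * conj z‖ ^ 2 < 1 := pow_lt_one₀ (norm_nonneg _) hu two_ne_zero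
    have : 0 < ‖1 + a * z‖ := norm_pos_iff.2 haz
    have : 0 < 1 - ‖r * conj z‖ ^ 2 := by linarith
    positivity
  have := two_mul_re_conj_one_add_mul (a * z) (r * conj z)
  rw [hsubst]
  linarith

lemma re_polarDeriv_prod_X_sub_C_pos {a z : ℂ} (ha : ‖a‖ ≤ 1) (hz : ‖z‖ = 1)
    (haz : 1 + a * z ≠ 0) {M : Multiset ℂ} (hM : ∀ r ∈ M, ‖r‖ < 1) (hM0 : M ≠ 0) :
    0 < (conj (1 + a * z) * z * polarDeriv a M.card z (M.map (X - C ·)).prod *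
      conj ((M.map (X - C ·)).prod.eval z)).re := by
  induction M using Multiset.induction_on with
  | empty => exact absurd rfl hM0
  | cons r M ih =>
    have hr : ‖r‖ < 1 := hM r (Multiset.mem_cons_self r M)
    have hM' : ∀ s ∈ M, ‖s‖ < 1 := fun s hs => hM s (Multiset.mem_cons_of_mem hs)
    set q := (M.map (X - C ·)).prod
    have hqz : q.eval z ≠ 0 := by
      simp only [q, eval_multiset_prod, Multiset.map_map, Function.comp_def, eval_sub, eval_X,
        eval_C, ne_eq, Multiset.prod_eq_zero_iff, Multiset.mem_map, sub_eq_zero, not_exists,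
        not_and]
      intro s hs hzs
      exact (hM' s hs).not_ge (hzs ▸ hz.ge)
    -- the old quantity and the new linear factor's term, with real weights `normSq ≥ 0`
    have hsplit : conj (1 + a * z) * z * polarDeriv a (M.card + 1) z ((X - C r) * q) *
          conj (((X - C r) * q).eval z) =
        (Complex.normSq (z - r) : ℂ) *
            (conj (1 + a * z) * z * polarDeriv a M.card z q * conj (q.eval z)) +
          (Complex.normSq (q.eval z) : ℂ) *
            (conj (1 + a * z) * z * ((1 + a * r) * conj (z - r))) := by
      rw [polarDeriv_X_sub_C_mul, ← Complex.mul_conj, ← Complex.mul_conj]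
      simp only [eval_mul, eval_sub, eval_X, eval_C, map_mul, map_sub]
      ring
    rw [Multiset.map_cons, Multiset.prod_cons, Multiset.card_cons, hsplit, Complex.add_re,
      Complex.re_ofReal_mul, Complex.re_ofReal_mul]
    have hterm := re_conj_one_add_mul_pos ha hz hr haz
    have hq := mul_pos (Complex.normSq_pos.2 hqz) hterm
    rcases eq_or_ne M 0 with rfl | hMne
    · simpa [q] using hq
    · nlinarith [ih hM' hMne, Complex.normSq_nonneg (z - r)]

theorem polarDeriv_ne_zero {n : ℕ} (hn : 0 < n) {h : ℂ[X]} (hdeg : h.natDegree = n)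
    (hroots : RootsInUnitBall h) {a z : ℂ} (ha : ‖a‖ ≤ 1) (hz : ‖z‖ = 1) :
    polarDeriv a n z h ≠ 0 := by
  have hhz : h.eval z ≠ 0 := hroots.eval_ne_zero hz.ge
  by_cases haz : 1 + a * z = 0
  · have ha0 : a ≠ 0 := by rintro rfl; simp at haz
    simpa [haz, hn.ne', ha0] using hhz
  have hh0 : h ≠ 0 := by rintro rfl; simp at hhz
  have hcard : Multiset.card h.roots = n := IsAlgClosed.card_roots_eq_natDegree.trans hdeg
  have hpos := re_polarDeriv_prod_X_sub_C_pos ha hz haz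
    (fun r hr => hroots r (isRoot_of_mem_roots hr))
    (by rintro h0; rw [h0, Multiset.card_zero] at hcard; exact hn.ne hcard)
  rw [(IsAlgClosed.splits h).eq_prod_roots, ← smul_eq_C_mul, map_smul, smul_eq_mul]
  refine mul_ne_zero (leadingCoeff_ne_zero.2 hh0) fun h0 => ?_
  rw [hcard, h0] at hpos
  simp at hpos

lemma norm_sub_lt_norm_mul_sub {y r : ℂ} (hy : 1 ≤ ‖y‖) (hr : ‖r‖ < 1) {R : ℝ} (hR : 1 < R) :
    ‖y - r‖ < ‖(R : ℂ) * y - r‖ := by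
  have hre : (y * conj r).re < ‖y‖ ^ 2 :=
    calc (y * conj r).re ≤ ‖y‖ * ‖r‖ := by
          simpa [Complex.norm_conj] using Complex.re_le_norm (y * conj r)
      _ < ‖y‖ ^ 2 := by nlinarith
  have hexp : ‖(R : ℂ) * y - r‖ ^ 2 - ‖y - r‖ ^ 2 =
      (R - 1) * ((R + 1) * ‖y‖ ^ 2 - 2 * (y * conj r).re) := by
    simp only [Complex.sq_norm, Complex.normSq_apply, Complex.mul_re, Complex.mul_im,
      Complex.sub_re, Complex.sub_im, Complex.ofReal_re, Complex.ofReal_im, Complex.conj_re,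
      Complex.conj_im]
    ring
  have : 0 < (R - 1) * ((R + 1) * ‖y‖ ^ 2 - 2 * (y * conj r).re) := by
    apply mul_pos (by linarith)
    nlinarith [sq_nonneg ‖y‖]
  exact lt_of_pow_lt_pow_left₀ 2 (norm_nonneg _) (by linarith)

theorem norm_eval_lt_norm_eval_mul {h : ℂ[X]} (hroots : RootsInUnitBall h)
    (hdeg : 0 < h.natDegree) {y : ℂ} (hy : 1 ≤ ‖y‖) {R : ℝ} (hR : 1 < R) :
    ‖h.eval y‖ < ‖h.eval (R * y)‖ := by
  have hh0 : h ≠ 0 := by rintro rfl; simp at hdeg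
  have hM : ∀ r ∈ h.roots, ‖r‖ < 1 := fun r hr => hroots r (isRoot_of_mem_roots hr)
  have hnorm : ∀ m : Multiset ℂ, ‖m.prod‖ = (m.map (‖·‖)).prod := map_multiset_prod normHom
  simp only [(IsAlgClosed.splits h).eval_eq_prod_roots, norm_mul, hnorm, Multiset.map_map,
    Function.comp_def]
  refine mul_lt_mul_of_pos_left (Multiset.prod_map_lt_prod_map ?_ _ _ ?_ ?_)
    (norm_pos_iff.2 (leadingCoeff_ne_zero.2 hh0))
  · rw [← Multiset.card_pos, IsAlgClosed.card_roots_eq_natDegree]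
    exact hdeg
  · exact fun r hr => norm_pos_iff.2 (sub_ne_zero.2 fun hyr => (hM r hr).not_ge (hyr ▸ hy))
  · exact fun r hr => norm_sub_lt_norm_mul_sub hy (hM r hr) hR

lemma coeff_comp_C_mul_X_sub_C_mul (h : ℂ[X]) (c β : ℂ) (m : ℕ) :
    (h.comp (C c * X) - C β * h).coeff m = h.coeff m * (c ^ m - β) := by
  rw [coeff_sub, comp_C_mul_X_coeff, coeff_C_mul]
  ring

section Dilation

variable {n : ℕ} {h : ℂ[X]} {R : ℝ} {β : ℂ}

lemma natDegree_comp_C_mul_X_sub_C_mul (hn : 0 < n) (hdeg : h.natDegree = n) (hR : 1 ≤ R)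
    (hβ : ‖β‖ ≤ 1) (hRβ : ¬(R = 1 ∧ β = 1)) :
    (h.comp (C (R : ℂ) * X) - C β * h).natDegree = n := by
  have hh0 : h ≠ 0 := by rintro rfl; simp [← hdeg] at hn
  have hRn : (R : ℂ) ^ n ≠ β := by
    intro hRnβ
    have hle : R ^ n ≤ 1 := by
      rwa [← hRnβ, norm_pow, Complex.norm_real, Real.norm_of_nonneg (by linarith)] at hβ
    have hR1 : R = 1 := (pow_eq_one_iff_of_nonneg (by linarith) hn.ne').1
      (le_antisymm hle (one_le_pow₀ hR))
    exact hRβ ⟨hR1, by rw [← hRnβ, hR1]; simp⟩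
  refine le_antisymm (natDegree_le_iff_coeff_eq_zero.2 fun m hm => ?_)
    (le_natDegree_of_ne_zero ?_)
  · rw [coeff_comp_C_mul_X_sub_C_mul, coeff_eq_zero_of_natDegree_lt (hdeg ▸ hm), zero_mul]
  · rw [coeff_comp_C_mul_X_sub_C_mul, ← hdeg, coeff_natDegree]
    exact mul_ne_zero (leadingCoeff_ne_zero.2 hh0) (sub_ne_zero.2 (hdeg ▸ hRn))

lemma rootsInUnitBall_comp_C_mul_X_sub_C_mul (hroots : RootsInUnitBall h)
    (hdeg : 0 < h.natDegree) (hR : 1 ≤ R) (hβ : ‖β‖ ≤ 1) (hRβ : ¬(R = 1 ∧ β = 1)) :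
    RootsInUnitBall (h.comp (C (R : ℂ) * X) - C β * h) := by
  intro w hw
  by_contra! hw1
  have hhw := hroots.eval_ne_zero hw1
  simp only [eval_sub, eval_comp, eval_mul, eval_C, eval_X, sub_eq_zero] at hw
  rcases hR.eq_or_lt with rfl | hR
  · refine hRβ ⟨rfl, (mul_eq_right₀ hhw).1 ?_⟩
    simpa using hw.symm
  · have := norm_eval_lt_norm_eval_mul hroots hdeg hw1 hR
    rw [hw, norm_mul] at this
    nlinarith [norm_nonneg (h.eval w)]

end Dilation

lemma eval_reflect_of_ne_zero {n : ℕ} {f : ℂ[X]} (hf : f.natDegree ≤ n) {w : ℂ} (hw : w ≠ 0) :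
    (reflect n f).eval w = w ^ n * f.eval w⁻¹ := by
  have : Invertible w⁻¹ := invertibleOfNonzero (inv_ne_zero hw)
  have key := eval₂_reflect_mul_pow (RingHom.id ℂ) w⁻¹ n f hf
  rw [invOf_eq_inv, inv_inv] at key
  rw [← eval₂_id, ← eval₂_id, ← key, inv_pow, mul_comm, inv_mul_cancel_right₀ (pow_ne_zero n hw)]

lemma eval_reflect_zero (n : ℕ) (f : ℂ[X]) : (reflect n f).eval 0 = f.coeff n := by
  rw [← coeff_zero_eq_eval_zero, coeff_reflect, revAt_le n.zero_le, Nat.sub_zero]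

theorem reflect_eval_ne_zero_iff {n : ℕ} {h : ℂ[X]} (hh : h.natDegree ≤ n) :
    (∀ w : ℂ, ‖w‖ ≤ 1 → (reflect n h).eval w ≠ 0) ↔ h.natDegree = n ∧ RootsInUnitBall h := by
  constructor
  · intro hrefl
    refine ⟨le_antisymm hh (le_natDegree_of_ne_zero ?_), fun z hz => ?_⟩
    · simpa [eval_reflect_zero] using hrefl 0 (by simp)
    · by_contra! hz1
      have hz0 : z ≠ 0 := norm_pos_iff.1 (by linarith)
      refine hrefl z⁻¹ (by rw [norm_inv]; exact inv_le_one_of_one_le₀ hz1) ?_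
      rw [eval_reflect_of_ne_zero hh (inv_ne_zero hz0), inv_inv, hz, mul_zero]
  · rintro ⟨hdeg, hroots⟩ w hw
    rcases eq_or_ne w 0 with rfl | hw0
    · have hh0 : h ≠ 0 := by
        rintro rfl
        simpa using hroots 1
      rw [eval_reflect_zero, ← hdeg, coeff_natDegree]
      exact leadingCoeff_ne_zero.2 hh0
    · rw [eval_reflect_of_ne_zero hh hw0]
      refine mul_ne_zero (pow_ne_zero n hw0) (hroots.eval_ne_zero ?_)
      rw [norm_inv]
      exact one_le_inv_iff₀.2 ⟨norm_pos_iff.2 hw0, hw⟩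

lemma norm_le_norm_of_forall_sphere {f g : ℂ → ℂ} (hf : Differentiable ℂ f)
    (hg : Differentiable ℂ g) (hg0 : ∀ w : ℂ, ‖w‖ ≤ 1 → g w ≠ 0)
    (hfg : ∀ w : ℂ, ‖w‖ = 1 → ‖f w‖ ≤ ‖g w‖) {w : ℂ} (hw : ‖w‖ ≤ 1) :
    ‖f w‖ ≤ ‖g w‖ := by
  have hquot : ‖(f / g) w‖ ≤ 1 := by
    refine Complex.norm_le_of_forall_mem_frontier_norm_le isBounded_ball
      (DifferentiableOn.diffContOnCl ?_) (fun x hx => ?_)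
      (by rwa [closure_ball _ one_ne_zero, mem_closedBall_zero_iff])
    · rw [closure_ball _ one_ne_zero]
      exact hf.differentiableOn.div hg.differentiableOn fun x hx => hg0 x (by simpa using hx)
    · rw [frontier_ball _ one_ne_zero, mem_sphere_zero_iff_norm] at hx
      rw [Pi.div_apply, norm_div]
      exact div_le_one_of_le₀ (hfg x hx) (norm_nonneg _)
  rwa [Pi.div_apply, norm_div, div_le_one (norm_pos_iff.2 (hg0 w hw))] at hquot

section Comparison

variable {n : ℕ} {P p : ℂ[X]}

lemma norm_eval_reflect_le (hP : P.natDegree = n) (hzeros : RootsInUnitBall P)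
    (hp : p.natDegree ≤ n) (hle : ∀ z : ℂ, ‖z‖ = 1 → ‖p.eval z‖ ≤ ‖P.eval z‖) {w : ℂ}
    (hw : ‖w‖ ≤ 1) : ‖(reflect n p).eval w‖ ≤ ‖(reflect n P).eval w‖ := by
  refine norm_le_norm_of_forall_sphere (Polynomial.differentiable _) (Polynomial.differentiable _)
    ((reflect_eval_ne_zero_iff hP.le).2 ⟨hP, hzeros⟩) (fun x hx => ?_) hw
  have hx0 : x ≠ 0 := norm_pos_iff.1 (by rw [hx]; exact one_pos)
  rw [eval_reflect_of_ne_zero hp hx0, eval_reflect_of_ne_zero hP.le hx0, norm_mul, norm_mul]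
  gcongr
  exact hle _ (by rw [norm_inv, hx, inv_one])

theorem norm_apply_le_of_forall_ne_zero (L : ℂ[X] →ₗ[ℂ] ℂ)
    (hL : ∀ h : ℂ[X], h.natDegree = n → RootsInUnitBall h → L h ≠ 0)
    (hP : P.natDegree = n) (hzeros : RootsInUnitBall P) (hp : p.natDegree ≤ n)
    (hle : ∀ z : ℂ, ‖z‖ = 1 → ‖p.eval z‖ ≤ ‖P.eval z‖) :
    ‖L p‖ ≤ ‖L P‖ := by
  by_contra! hlt
  have hLP : L P ≠ 0 := hL P hP hzeros
  set c := L p / L P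
  have hc : 1 < ‖c‖ := by
    rwa [norm_div, one_lt_div (norm_pos_iff.2 hLP)]
  -- `p - c P` would be a polynomial of the forbidden kind on which `L` vanishes
  have hdeg : (p - C c * P).natDegree ≤ n :=
    (natDegree_sub_le_of_le hp (natDegree_C_mul_le c P |>.trans hP.le)).trans_eq (max_self n)
  obtain ⟨hdeg', hroots⟩ := (reflect_eval_ne_zero_iff hdeg).1 fun w hw => by
    have hPw := (reflect_eval_ne_zero_iff hP.le).2 ⟨hP, hzeros⟩ w hw
    rw [reflect_sub, reflect_C_mul, eval_sub, eval_mul, eval_C, sub_ne_zero]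
    intro heq
    have := norm_eval_reflect_le hP hzeros hp hle hw
    rw [heq, norm_mul] at this
    nlinarith [norm_pos_iff.2 hPw]
  refine hL _ hdeg' hroots ?_
  rw [← smul_eq_C_mul, map_sub, map_smul, smul_eq_mul, div_mul_cancel₀ _ hLP, sub_self]

end Comparison

theorem stmt_12 (n : ℕ) (P p : Polynomial ℂ) (hP : P.natDegree = n)
    (hzeros : ∀ z : ℂ, P.eval z = 0 → ‖z‖ < 1)
    (hp : p.natDegree ≤ n)
    (hle : ∀ z : ℂ, ‖z‖ = 1 → ‖p.eval z‖ ≤ ‖P.eval z‖)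
    (β a : ℂ) (hβ : ‖β‖ ≤ 1) (ha : ‖a‖ ≤ 1)
    (R : ℝ) (hR : 1 ≤ R) :
    ∀ z : ℂ, ‖z‖ = 1 →
      ‖((1 + a * z) * R * (derivative p).eval (R * z) - n * a * p.eval (R * z)) -
          β * ((1 + a * z) * (derivative p).eval z - n * a * p.eval z)‖ ≤
        ‖((1 + a * z) * R * (derivative P).eval (R * z) - n * a * P.eval (R * z)) -
          β * ((1 + a * z) * (derivative P).eval z - n * a * P.eval z)‖ := by
  intro z hz
  obtain rfl | hn := Nat.eq_zero_or_pos n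
  · rw [eq_C_of_natDegree_eq_zero hP, eq_C_of_natDegree_le_zero hp]
    simp
  by_cases hRβ : R = 1 ∧ β = 1
  · obtain ⟨rfl, rfl⟩ := hRβ
    simp
  let D : ℂ[X] →ₗ[ℂ] ℂ[X] := (aeval (C (R : ℂ) * X)).toLinearMap - β • LinearMap.id
  have hD : ∀ q, D q = q.comp (C (R : ℂ) * X) - C β * q := fun q => by
    simp [D, comp_eq_aeval, smul_eq_C_mul]
  have key := norm_apply_le_of_forall_ne_zero (polarDeriv a n z ∘ₗ D)
    (fun h hdeg hroots => by
      simpa [hD] using polarDeriv_ne_zero hn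
        (natDegree_comp_C_mul_X_sub_C_mul hn hdeg hR hβ hRβ)
        (rootsInUnitBall_comp_C_mul_X_sub_C_mul hroots (hdeg ▸ hn) hR hβ hRβ) ha hz)
    hP hzeros hp hle
  convert key using 2 <;> simp [hD, derivative_comp, eval_comp] <;> ring
end
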